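/- For every real m ≥ 1 and every x > 0, we have x·φ_m'(x) = x e^{-x} ∑_{j=0}^∞ x^j/(j!(m+j)) ≤ 1 - e^{-x} < 1. -/

import Mathlib

open Real MeasureTheory Filter ProbabilityTheory

/-- The digamma function psi(x) = Gamma'(x)/Gamma(x). -/
noncomputable def psi (x : ℝ) : ℝ := deriv Real.Gamma x / Real.Gamma x

/-- phi_m(x) = e^{-x} * sum_j (x^j/j!) psi(j+m). -/
noncomputable def phi (m x : ℝ) : ℝ :=
  Real.exp (-x) * ∑' j : ℕ, x ^ j / (Nat.factorial j : ℝ) * psi (j + m)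

/-!
The recurrence `ψ(y + 1) = ψ(y) + 1/y` makes the coefficients `a j = ψ(j + m)` grow at most
like `2 ^ j`, so the exponential generating series `∑ a j x^j / j!` may be differentiated term by
term, and `(e^{-x} ∑ a j x^j / j!)' = e^{-x} ∑ (a (j+1) - a j) x^j / j!` with
`a (j+1) - a j = 1/(m + j)`. For `m ≥ 1` we have `j! (m + j) ≥ (j + 1)!`, and
`x ∑ x^j / (j+1)! = e^x - 1` gives the bound.
-/

open scoped Nat Topology

theorem Real.deriv_Gamma_add_one {y : ℝ} (hy : ∀ n : ℕ, y ≠ -n) :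
    deriv Gamma (y + 1) = Gamma y + y * deriv Gamma y := by
  have hy0 : y ≠ 0 := by simpa using hy 0
  have hrec : (fun z => Gamma (z + 1)) =ᶠ[𝓝 y] fun z => z * Gamma z := by
    filter_upwards [eventually_ne_nhds hy0] with z hz using Gamma_add_one hz
  rw [← deriv_comp_add_const, hrec.deriv_eq,
    deriv_fun_mul differentiableAt_fun_id (differentiableAt_Gamma hy)]
  simp

theorem psi_add_one {y : ℝ} (hy : ∀ n : ℕ, y ≠ -n) : psi (y + 1) = psi y + y⁻¹ := by
  have hy0 : y ≠ 0 := by simpa using hy 0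
  have hG := Gamma_ne_zero hy
  rw [psi, psi, Real.deriv_Gamma_add_one hy, Gamma_add_one hy0]
  field_simp
  ring

theorem psi_add_one_of_pos {y : ℝ} (hy : 0 < y) : psi (y + 1) = psi y + y⁻¹ :=
  psi_add_one fun n h => by linarith [h ▸ hy, (n.cast_nonneg : (0 : ℝ) ≤ n)]

theorem abs_psi_natCast_add_le {m : ℝ} (hm : 1 ≤ m) (j : ℕ) :
    |psi (j + m)| ≤ (|psi m| + 1) * 2 ^ j := by
  induction j with
  | zero => simp
  | succ k ih =>
    have hk : 1 ≤ (k : ℝ) + m := by linarith [(k.cast_nonneg : (0 : ℝ) ≤ k)]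
    have hinv : |((k : ℝ) + m)⁻¹| ≤ 1 := by
      rw [abs_inv, abs_of_pos (by linarith)]
      exact inv_le_one_of_one_le₀ hk
    have hpow : (1 : ℝ) ≤ 2 ^ k := one_le_pow₀ one_le_two
    calc |psi ((k + 1 : ℕ) + m)| = |psi (k + m) + ((k : ℝ) + m)⁻¹| := by
          rw [← psi_add_one_of_pos (by linarith)]; push_cast; ring_nf
      _ ≤ (|psi m| + 1) * 2 ^ k + 1 := (abs_add_le _ _).trans (add_le_add ih hinv)
      _ ≤ (|psi m| + 1) * 2 ^ (k + 1) := by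
          rw [pow_succ]; nlinarith [abs_nonneg (psi m)]

section ExponentialGeneratingFunction

variable {a : ℕ → ℝ} {C K : ℝ}

theorem summable_pow_div_factorial_mul (ha : ∀ j, |a j| ≤ C * K ^ j) (x : ℝ) :
    Summable fun j => x ^ j / j ! * a j := by
  refine .of_norm_bounded ((summable_pow_div_factorial (|x| * K)).mul_left C) fun j => ?_
  simp only [norm_mul, norm_div, norm_pow, Real.norm_eq_abs, Nat.abs_cast, mul_pow]
  calc |x| ^ j / j ! * |a j| ≤ |x| ^ j / j ! * (C * K ^ j) := by gcongr; exact ha j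
    _ = C * (|x| ^ j * K ^ j / j !) := by ring

theorem hasDerivAt_tsum_pow_div_factorial_mul (ha : ∀ j, |a j| ≤ C * K ^ j) (x : ℝ) :
    HasDerivAt (fun y => ∑' j, y ^ j / j ! * a j) (∑' j, x ^ j / j ! * a (j + 1)) x := by
  set R := |x| + 1
  set g' : ℕ → ℝ → ℝ := fun j y => j * y ^ (j - 1) / j ! * a j
  set u : ℕ → ℝ := fun j => j * R ^ (j - 1) / j ! * (C * K ^ j)
  have hu : Summable u := by
    rw [← summable_nat_add_iff 1]
    refine ((summable_pow_div_factorial (R * K)).mul_left (C * K)).congr fun j => ?_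
    simp only [u, Nat.add_sub_cancel, Nat.factorial_succ, Nat.cast_mul, pow_succ, mul_pow]
    push_cast
    field_simp
  have hg'u : ∀ j, ∀ y ∈ Set.Ioo (-R) R, ‖g' j y‖ ≤ u j := by
    intro j y hy
    have hyR : |y| ≤ R := abs_le.mpr ⟨hy.1.le, hy.2.le⟩
    simp only [g', u, norm_mul, norm_div, norm_pow, Real.norm_eq_abs, Nat.abs_cast]
    gcongr
    exact ha j
  have hx : x ∈ Set.Ioo (-R) R := abs_lt.mp (lt_add_one _)
  have hderiv := hasDerivAt_tsum_of_isPreconnected (g := fun j y => y ^ j / j ! * a j) (g' := g')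
    hu isOpen_Ioo isPreconnected_Ioo
    (fun j y _ => ((hasDerivAt_pow j y).div_const (j ! : ℝ)).mul_const (a j)) hg'u hx
    (summable_pow_div_factorial_mul ha x) hx
  refine hderiv.congr_deriv ?_
  rw [(Summable.of_norm_bounded hu fun j => hg'u j x hx).tsum_eq_zero_add]
  simp only [g', CharP.cast_eq_zero, zero_mul, zero_div, zero_add, Nat.add_sub_cancel,
    Nat.factorial_succ]
  refine tsum_congr fun j => ?_
  push_cast
  field_simp

theorem hasDerivAt_exp_neg_mul_tsum_pow_div_factorial_mul (ha : ∀ j, |a j| ≤ C * K ^ j)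
    (x : ℝ) :
    HasDerivAt (fun y => exp (-y) * ∑' j, y ^ j / j ! * a j)
      (exp (-x) * ∑' j, x ^ j / j ! * (a (j + 1) - a j)) x := by
  have ha' : ∀ j, |a (j + 1)| ≤ C * K * K ^ j := fun j => by
    simpa only [pow_succ, mul_assoc, mul_comm K] using ha (j + 1)
  have hderiv := ((hasDerivAt_neg x).exp).mul (hasDerivAt_tsum_pow_div_factorial_mul ha x)
  refine hderiv.congr_deriv ?_
  simp only [mul_sub]
  rw [(summable_pow_div_factorial_mul ha' x).tsum_sub (summable_pow_div_factorial_mul ha x)]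
  ring

end ExponentialGeneratingFunction

theorem hasDerivAt_phi {m : ℝ} (hm : 1 ≤ m) (x : ℝ) :
    HasDerivAt (phi m) (exp (-x) * ∑' j : ℕ, x ^ j / (j ! * (m + j))) x := by
  refine (hasDerivAt_exp_neg_mul_tsum_pow_div_factorial_mul (abs_psi_natCast_add_le hm) x
    ).congr_deriv (congrArg _ (tsum_congr fun j => ?_))
  have hj : 0 < (j : ℝ) + m := by positivity
  rw [Nat.cast_succ, add_right_comm, psi_add_one_of_pos hj, add_sub_cancel_left, add_comm m]
  field_simp

theorem mul_tsum_pow_div_factorial_succ (x : ℝ) :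
    x * ∑' j : ℕ, x ^ j / (j + 1) ! = exp x - 1 := by
  have hexp : HasSum (fun j : ℕ => x ^ (j + 1) / (j + 1) !) (exp x - 1) := by
    simpa [Real.exp_eq_exp_ℝ] using
      (hasSum_nat_add_iff' 1).mpr (NormedSpace.expSeries_div_hasSum_exp x)
  rw [← tsum_mul_left, ← hexp.tsum_eq]
  exact tsum_congr fun j => by ring

theorem mul_tsum_pow_div_factorial_mul_add_le {m x : ℝ} (hm : 1 ≤ m) (hx : 0 ≤ x) :
    x * ∑' j : ℕ, x ^ j / (j ! * (m + j)) ≤ exp x - 1 := by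
  have hfac (j : ℕ) : ((j + 1) ! : ℝ) ≤ j ! * (m + j) := by
    rw [Nat.factorial_succ, Nat.cast_mul, mul_comm]
    exact mul_le_mul_of_nonneg_left (by push_cast; linarith) (by positivity)
  rw [← mul_tsum_pow_div_factorial_succ]
  have hsucc : Summable fun j : ℕ => x ^ j / (j + 1)! :=
    (summable_pow_div_factorial x).of_nonneg_of_le (fun j => by positivity) fun j =>
      div_le_div_of_nonneg_left (by positivity) (by positivity)
        (Nat.cast_le.mpr (Nat.factorial_le j.le_succ))
  gcongr with j
  · exact hsucc.of_nonneg_of_le (fun j => by positivity) fun j =>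
      div_le_div_of_nonneg_left (by positivity) (by positivity) (hfac j)
  · exact hfac j

theorem stmt2 (m : ℝ) (hm : 1 ≤ m) (x : ℝ) (hx : 0 < x) :
    x * deriv (phi m) x
      = x * Real.exp (-x) * ∑' j : ℕ, x ^ j / ((Nat.factorial j : ℝ) * (m + j)) ∧
    x * Real.exp (-x) * ∑' j : ℕ, x ^ j / ((Nat.factorial j : ℝ) * (m + j))
      ≤ 1 - Real.exp (-x) ∧
    1 - Real.exp (-x) < 1 := by
  refine ⟨by rw [(hasDerivAt_phi hm x).deriv, mul_assoc], ?_, by simpa using exp_pos (-x)⟩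
  calc x * exp (-x) * ∑' j : ℕ, x ^ j / (j ! * (m + j))
      = exp (-x) * (x * ∑' j : ℕ, x ^ j / (j ! * (m + j))) := by ring
    _ ≤ exp (-x) * (exp x - 1) := by gcongr; exact mul_tsum_pow_div_factorial_mul_add_le hm hx.le
    _ = 1 - exp (-x) := by rw [mul_sub, ← exp_add, neg_add_cancel, exp_zero, mul_one]
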